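/- arXiv:2011.08316 — 10 statements merged into one kernel-verified Lean document; each statement's English description precedes it below -/
import Mathlib

section
/- For every (x,y) ∈ ℝ² with 2y − 1 ≠ 0, the function H(x,y) = (x² + y²)/(2y − 1) satisfies ∂H/∂x(x,y)·(−y − x² + y²) + ∂H/∂y(x,y)·(x − 2xy) = 0; that is, H is a first integral of the quadratic Lotka–Volterra vector field X₀ given by ẋ = −y − x² + y², ẏ = x − 2xy. -/
/-- `H(x,y) = (x² + y²)/(2y − 1)` is a first integral of the Lotka–Volterra
vector field `ẋ = −y − x² + y², ẏ = x − 2xy`: at every point with `2y − 1 ≠ 0`,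
`∂H/∂x · (−y − x² + y²) + ∂H/∂y · (x − 2xy) = 0`. -/
theorem lotka_volterra_first_integral (x y : ℝ) (hy : 2 * y - 1 ≠ 0) :
    deriv (fun s : ℝ => (s ^ 2 + y ^ 2) / (2 * y - 1)) x * (-y - x ^ 2 + y ^ 2)
      + deriv (fun s : ℝ => (x ^ 2 + s ^ 2) / (2 * s - 1)) y * (x - 2 * x * y) = 0 := by
  have h1 : HasDerivAt (fun s : ℝ => (s ^ 2 + y ^ 2) / (2 * y - 1))
      (2 * x / (2 * y - 1)) x := by
    have : HasDerivAt (fun s : ℝ => s ^ 2 + y ^ 2) (2 * x) x := by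
      simpa using ((hasDerivAt_pow 2 x).add_const (y ^ 2))
    simpa using this.div_const (2 * y - 1)
  have h2 : HasDerivAt (fun s : ℝ => (x ^ 2 + s ^ 2) / (2 * s - 1))
      ((2 * y * (2 * y - 1) - (x ^ 2 + y ^ 2) * 2) / (2 * y - 1) ^ 2) y := by
    have hn : HasDerivAt (fun s : ℝ => x ^ 2 + s ^ 2) (2 * y) y := by
      simpa using ((hasDerivAt_pow 2 y).const_add (x ^ 2))
    have hd : HasDerivAt (fun s : ℝ => 2 * s - 1) 2 y := by
      simpa using ((hasDerivAt_id y).const_mul 2).sub_const 1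
    exact hn.div hd hy
  rw [h1.deriv, h2.deriv]
  field_simp
  ring
end

section
/- Let z₀ ∈ ℂ with z₀ ≠ 0 and |1/z₀ + i| ≠ 1. Then the function z(t) = 1/(e^{−it}(1/z₀ + i) − i) is defined for all t ∈ ℝ, satisfies z(0) = z₀, solves the differential equation z′(t) = i·z(t) − z(t)², and is periodic of period 2π: z(t + 2π) = z(t) for all t ∈ ℝ. Hence the two centers of the system ż = iz − z² are isochronous with period 2π. -/
/-!
The substitution `w = 1/z` turns the Riccati equation `ż = iz − z²` into the linear equation
`ẇ = 1 − iw`, whose solutions `w(t) = e^{−it} w₀ − i` are `2π`-periodic. They never vanish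
because `|e^{−it} w₀| = |w₀| ≠ 1 = |i|`, so every `z = 1/w` is a global `2π`-periodic solution.
-/

open Complex

theorem HasDerivAt.one_div_riccati {𝕜 𝕜' : Type*} [NontriviallyNormedField 𝕜]
    [NontriviallyNormedField 𝕜'] [NormedAlgebra 𝕜 𝕜'] {f : 𝕜 → 𝕜'} {a : 𝕜'} {x : 𝕜}
    (hf : HasDerivAt f (1 - a * f x) x) (hx : f x ≠ 0) :
    HasDerivAt (fun s => 1 / f s) (a * (1 / f x) - (1 / f x) ^ 2) x := by
  simp only [one_div]
  convert hf.fun_inv hx using 1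
  field_simp
  ring

theorem exp_neg_I_mul_periodic :
    Function.Periodic (fun t : ℝ => exp (-I * t)) (2 * Real.pi) := by
  intro t
  convert exp_mul_I_periodic.sub_eq (-t : ℂ) using 2 <;> push_cast <;> ring

theorem exp_neg_I_mul_mul_sub_I_ne_zero {w : ℂ} (hw : ‖w‖ ≠ 1) (t : ℝ) :
    exp (-I * t) * w - I ≠ 0 := by
  intro h
  apply hw
  simpa [norm_exp] using congrArg norm (sub_eq_zero.mp h)

theorem hasDerivAt_exp_neg_I_mul_mul_sub_I (w : ℂ) (t : ℝ) :
    HasDerivAt (fun t : ℝ => exp (-I * t) * w - I) (1 - I * (exp (-I * t) * w - I)) t := by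
  have hlin : HasDerivAt (fun t : ℝ => -I * t) (-I) t := by
    simpa using (hasDerivAt_id (t : ℂ)).comp_ofReal.const_mul (-I)
  refine ((hlin.cexp.mul_const w).sub_const I).congr_deriv ?_
  linear_combination -I_sq

theorem isochronous_period_two_pi_general (z₀ : ℂ)
    (habs : ‖1 / z₀ + I‖ ≠ 1) :
    (∀ t : ℝ, Complex.exp (-I * t) * (1 / z₀ + I) - I ≠ 0)
    ∧ (fun t : ℝ => 1 / (Complex.exp (-I * t) * (1 / z₀ + I) - I)) 0 = z₀
    ∧ (∀ t : ℝ, HasDerivAt (fun t : ℝ => 1 / (Complex.exp (-I * t) * (1 / z₀ + I) - I))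
        (I * (1 / (Complex.exp (-I * t) * (1 / z₀ + I) - I))
          - (1 / (Complex.exp (-I * t) * (1 / z₀ + I) - I)) ^ 2) t)
    ∧ (∀ t : ℝ, (1 : ℂ) / (Complex.exp (-I * ((t + 2 * Real.pi) : ℝ)) * (1 / z₀ + I) - I)
        = 1 / (Complex.exp (-I * t) * (1 / z₀ + I) - I)) := by
  have hne := exp_neg_I_mul_mul_sub_I_ne_zero habs
  refine ⟨hne, by simp, fun t => ?_, fun t => ?_⟩
  · exact (hasDerivAt_exp_neg_I_mul_mul_sub_I _ t).one_div_riccati (hne t)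
  · exact congrArg (fun e => 1 / (e * (1 / z₀ + I) - I)) (exp_neg_I_mul_periodic t)

/-- The two centers of `ż = iz − z²` are isochronous of period `2π`:
for `z₀ ≠ 0` with `|1/z₀ + i| ≠ 1`, the function
`z(t) = 1/(e^{−it}(1/z₀ + i) − i)` is defined for all real `t`, satisfies
`z(0) = z₀`, solves `z′ = iz − z²`, and is `2π`-periodic. -/
theorem isochronous_period_two_pi (z₀ : ℂ) (hz₀ : z₀ ≠ 0)
    (habs : ‖1 / z₀ + I‖ ≠ 1) :
    (∀ t : ℝ, Complex.exp (-I * t) * (1 / z₀ + I) - I ≠ 0)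
    ∧ (fun t : ℝ => 1 / (Complex.exp (-I * t) * (1 / z₀ + I) - I)) 0 = z₀
    ∧ (∀ t : ℝ, HasDerivAt (fun t : ℝ => 1 / (Complex.exp (-I * t) * (1 / z₀ + I) - I))
        (I * (1 / (Complex.exp (-I * t) * (1 / z₀ + I) - I))
          - (1 / (Complex.exp (-I * t) * (1 / z₀ + I) - I)) ^ 2) t)
    ∧ (∀ t : ℝ, (1 : ℂ) / (Complex.exp (-I * ((t + 2 * Real.pi) : ℝ)) * (1 / z₀ + I) - I)
        = 1 / (Complex.exp (-I * t) * (1 / z₀ + I) - I)) :=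
  isochronous_period_two_pi_general z₀ habs
end

section
/- Let λ₁, λ₂, λ₃ ∈ ℝ satisfy λ₁ + λ₃ + λ₁λ₂ = 0. Set B = λ₂ + iλ₃, α = (i − λ₁)/(1 + λ₁²), and β = λ₂ − λ₁λ₃ − 1. Then for all z, w ∈ ℂ the following polynomial identity holds: [(1 + iλ₁)(λ₁ + i − z + Bw) + (1 − iλ₁)(λ₁ − i − w + B̄z)]·(αz + ᾱw + 1) + β·[αz(λ₁ + i − z + Bw) + ᾱw(λ₁ − i − w + B̄z)] = 0, where B̄ and ᾱ are the complex conjugates of B and α. Equivalently, the (multivalued) function H = z^{1+iλ₁} w^{1−iλ₁} (αz + ᾱw + 1)^{β} has logarithmic derivative zero along the vector field ż = (λ₁ + i)z − z² + Bzw, ẇ = (λ₁ − i)w − w² + B̄zw; hence when w = z̄ this gives a first integral of ż = (λ₁ + i)z − z² + Bzz̄, so this system has a center near z = i whenever λ₁ + λ₃ + λ₁λ₂ = 0. -/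
/-!
With `A = 1 + iλ₁`, the constants satisfy `α Ā = i` and, exactly on the branch
`λ₁ + λ₃ + λ₁λ₂ = 0`, `A + β = Ā B̄`. Substituting these relations, the coefficients of the
two logarithmic derivatives `P = λ₁ + i − z + Bw` and `Q = λ₁ − i − w + B̄z` in the expression
become `iQ` and `−iP`, so it collapses to `P·iQ − Q·iP = 0`.
-/

open Complex

theorem log_deriv_combination_eq_zero {R : Type*} [CommRing R]
    (i L B B' α α' β z w : R) (hi : i ^ 2 = -1)
    (hα : α * (1 - i * L) = i) (hα' : α' * (1 + i * L) = -i)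
    (hβ : 1 + i * L + β = (1 - i * L) * B') (hβ' : 1 - i * L + β = (1 + i * L) * B) :
    ((1 + i * L) * (L + i - z + B * w) + (1 - i * L) * (L - i - w + B' * z))
        * (α * z + α' * w + 1)
      + β * (α * z * (L + i - z + B * w) + α' * w * (L - i - w + B' * z)) = 0 := by
  linear_combination ((L + i - z + B * w) + (L - i - w + B' * z)) * hi
    + (L + i - z + B * w) * (α * z * hβ + B' * z * hα + w * hα')
    + (L - i - w + B' * z) * (z * hα + α' * w * hβ' + B * w * hα')

theorem div_one_add_sq_mul_one_sub_I_mul (l : ℝ) :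
    (I - l) / (1 + (l : ℂ) ^ 2) * (1 - I * l) = I := by
  have hne : (1 : ℂ) + (l : ℂ) ^ 2 ≠ 0 := by
    exact_mod_cast (by positivity : (1 : ℝ) + l ^ 2 ≠ 0)
  rw [div_mul_eq_mul_div, div_eq_iff hne]
  linear_combination -l * I_sq

theorem one_add_I_mul_add_eq_mul_conj {l1 l2 l3 : ℝ} (hL : l1 + l3 + l1 * l2 = 0) :
    1 + I * l1 + (l2 - l1 * l3 - 1) = (1 - I * l1) * (starRingEnd ℂ) (l2 + I * l3) := by
  have hL' : (l1 : ℂ) + l3 + l1 * l2 = 0 := by exact_mod_cast hL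
  simp only [map_add, map_mul, conj_ofReal, conj_I]
  linear_combination I * hL' - l1 * l3 * I_sq

/-- Along the Lotka–Volterra branch `λ₁ + λ₃ + λ₁λ₂ = 0`, with
`B = λ₂ + iλ₃`, `α = (i − λ₁)/(1 + λ₁²)`, `β = λ₂ − λ₁λ₃ − 1`, the polynomial
identity expressing that `H = z^{1+iλ₁} w^{1−iλ₁} (αz + ᾱw + 1)^β` has zero
logarithmic derivative along `ż = (λ₁+i)z − z² + Bzw`, `ẇ = (λ₁−i)w − w² + B̄zw`
holds; hence the perturbed system has a center near `z = i`. -/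
theorem lotka_volterra_branch_first_integral (l1 l2 l3 : ℝ)
    (hL : l1 + l3 + l1 * l2 = 0) (z w : ℂ) :
    ((1 + I * (l1 : ℂ)) * ((l1 : ℂ) + I - z + ((l2 : ℂ) + I * (l3 : ℂ)) * w)
        + (1 - I * (l1 : ℂ)) * ((l1 : ℂ) - I - w
            + (starRingEnd ℂ) ((l2 : ℂ) + I * (l3 : ℂ)) * z))
      * (((I - (l1 : ℂ)) / (1 + (l1 : ℂ) ^ 2)) * z
          + (starRingEnd ℂ) ((I - (l1 : ℂ)) / (1 + (l1 : ℂ) ^ 2)) * w + 1)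
    + ((l2 : ℂ) - (l1 : ℂ) * (l3 : ℂ) - 1)
      * (((I - (l1 : ℂ)) / (1 + (l1 : ℂ) ^ 2)) * z
            * ((l1 : ℂ) + I - z + ((l2 : ℂ) + I * (l3 : ℂ)) * w)
        + (starRingEnd ℂ) ((I - (l1 : ℂ)) / (1 + (l1 : ℂ) ^ 2)) * w
            * ((l1 : ℂ) - I - w + (starRingEnd ℂ) ((l2 : ℂ) + I * (l3 : ℂ)) * z)) = 0 := by
  have hα := div_one_add_sq_mul_one_sub_I_mul l1
  have hβ := one_add_I_mul_add_eq_mul_conj hL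
  have hα' := congrArg (starRingEnd ℂ) hα
  have hβ' := congrArg (starRingEnd ℂ) hβ
  simp only [map_add, map_sub, map_mul, map_neg, map_one, conj_ofReal, conj_I] at hα' hβ'
  exact log_deriv_combination_eq_zero I l1 _ _ _ _ _ z w I_sq hα
    (by linear_combination hα') hβ (by linear_combination hβ')
end

section
/- Let G be the free group on three generators α, β, γ, let H ⊆ G be the normal closure of {βγ, (α,β)} where (x,y) = x⁻¹y⁻¹xy, and let (H,G) be the subgroup of G generated by all commutators (h,g) with h ∈ H, g ∈ G. Then for every w ∈ G, the element (α, β^w)·(α,β)⁻¹ belongs to (H,G), where β^w = w⁻¹βw; i.e., (α, β^w) ≡ (α,β) modulo (H,G). -/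
/-- In the free group `G` on `α, β, γ`, with `H` the normal closure of
`{βγ, (α,β)}` and `(H,G)` the subgroup generated by commutators `(h,g)`,
`h ∈ H`, `g ∈ G` (where `(x,y) = x⁻¹y⁻¹xy`), one has
`(α, β^w) ≡ (α, β) mod (H,G)` for every `w ∈ G`. -/
theorem commutator_conjugate_congruence (w : FreeGroup (Fin 3)) :
    let α := FreeGroup.of (0 : Fin 3)
    let β := FreeGroup.of (1 : Fin 3)
    let γ := FreeGroup.of (2 : Fin 3)
    let H := Subgroup.normalClosure {β * γ, α⁻¹ * β⁻¹ * α * β}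
    let HG := Subgroup.closure
      {x : FreeGroup (Fin 3) | ∃ h ∈ H, ∃ g : FreeGroup (Fin 3), x = h⁻¹ * g⁻¹ * h * g}
    (α⁻¹ * (w⁻¹ * β * w)⁻¹ * α * (w⁻¹ * β * w)) * (α⁻¹ * β⁻¹ * α * β)⁻¹ ∈ HG := by
  intro α β γ H HG
  have hnorm : (H : Subgroup (FreeGroup (Fin 3))).Normal := Subgroup.normalClosure_normal
  -- Step 1: for every w, (β, w) ∈ H
  have key : ∀ v : FreeGroup (Fin 3), β⁻¹ * v⁻¹ * β * v ∈ H := by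
    intro v
    refine FreeGroup.induction_on (C := fun v => β⁻¹ * v⁻¹ * β * v ∈ H) v ?_ ?_ ?_ ?_
    · have : β⁻¹ * (1 : FreeGroup (Fin 3))⁻¹ * β * 1 = 1 := by group
      simp only [this]; exact H.one_mem
    · intro i
      show β⁻¹ * (FreeGroup.of i)⁻¹ * β * FreeGroup.of i ∈ H
      fin_cases i
      · -- i = 0 : (β, α) = (α, β)⁻¹ ∈ H
        have hc : α⁻¹ * β⁻¹ * α * β ∈ H :=
          Subgroup.subset_normalClosure (Or.inr rfl)
        have he : β⁻¹ * α⁻¹ * β * α = (α⁻¹ * β⁻¹ * α * β)⁻¹ := by group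
        show β⁻¹ * α⁻¹ * β * α ∈ H
        rw [he]; exact H.inv_mem hc
      · -- i = 1 : (β, β) = 1
        have he : β⁻¹ * β⁻¹ * β * β = (1 : FreeGroup (Fin 3)) := by group
        show β⁻¹ * β⁻¹ * β * β ∈ H
        rw [he]; exact H.one_mem
      · -- i = 2 : (β, γ) = (β⁻¹ (βγ)⁻¹ β) (βγ)
        have hu : β * γ ∈ H := Subgroup.subset_normalClosure (Or.inl rfl)
        have h1 : β⁻¹ * (β * γ) * β⁻¹⁻¹ ∈ H := hnorm.conj_mem _ hu β⁻¹
        have h2 : (β⁻¹ * (β * γ) * β⁻¹⁻¹)⁻¹ * (β * γ) ∈ H :=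
          H.mul_mem (H.inv_mem h1) hu
        have he : β⁻¹ * γ⁻¹ * β * γ = (β⁻¹ * (β * γ) * β⁻¹⁻¹)⁻¹ * (β * γ) := by group
        show β⁻¹ * γ⁻¹ * β * γ ∈ H
        rw [he]; exact h2
    · intro i hi
      show β⁻¹ * ((FreeGroup.of i)⁻¹)⁻¹ * β * (FreeGroup.of i)⁻¹ ∈ H
      have hi' : β⁻¹ * (FreeGroup.of i)⁻¹ * β * FreeGroup.of i ∈ H := hi
      have h1 : FreeGroup.of i * (β⁻¹ * (FreeGroup.of i)⁻¹ * β * FreeGroup.of i)⁻¹ *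
          (FreeGroup.of i)⁻¹ ∈ H := hnorm.conj_mem _ (H.inv_mem hi') (FreeGroup.of i)
      have he : β⁻¹ * ((FreeGroup.of i)⁻¹)⁻¹ * β * (FreeGroup.of i)⁻¹ =
          FreeGroup.of i * (β⁻¹ * (FreeGroup.of i)⁻¹ * β * FreeGroup.of i)⁻¹ *
          (FreeGroup.of i)⁻¹ := by group
      rw [he]; exact h1
    · intro x y hx hy
      have h1 : y⁻¹ * (β⁻¹ * x⁻¹ * β * x) * y⁻¹⁻¹ ∈ H := hnorm.conj_mem _ hx y⁻¹
      have h2 : (β⁻¹ * y⁻¹ * β * y) * (y⁻¹ * (β⁻¹ * x⁻¹ * β * x) * y⁻¹⁻¹) ∈ H :=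
        H.mul_mem hy h1
      have he : β⁻¹ * (x * y)⁻¹ * β * (x * y) =
          (β⁻¹ * y⁻¹ * β * y) * (y⁻¹ * (β⁻¹ * x⁻¹ * β * x) * y⁻¹⁻¹) := by group
      rw [he]; exact h2
  -- Step 2: assemble
  set h : FreeGroup (Fin 3) := β⁻¹ * w⁻¹ * β * w with hdef
  have hH : h ∈ H := key w
  set c : FreeGroup (Fin 3) := α⁻¹ * β⁻¹ * α * β with cdef
  have g1 : h⁻¹ * α⁻¹ * h * α ∈ HG :=
    Subgroup.subset_closure ⟨h, hH, α, rfl⟩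
  have g2 : h⁻¹ * (c⁻¹)⁻¹ * h * c⁻¹ ∈ HG :=
    Subgroup.subset_closure ⟨h, hH, c⁻¹, rfl⟩
  have hx : (α⁻¹ * (w⁻¹ * β * w)⁻¹ * α * (w⁻¹ * β * w)) * (α⁻¹ * β⁻¹ * α * β)⁻¹ =
      (h⁻¹ * α⁻¹ * h * α)⁻¹ * (h⁻¹ * (c⁻¹)⁻¹ * h * c⁻¹) := by
    rw [hdef, cdef]; group
  rw [hx]
  exact HG.mul_mem (HG.inv_mem g1) g2
end

section
/- Let G be the free group on three generators α, β, γ, let H ⊆ G be the normal closure of {βγ, (α,β)} where (x,y) = x⁻¹y⁻¹xy, and let (H,G) be the subgroup generated by all commutators (h,g) with h ∈ H, g ∈ G. Then for every w ∈ G there exists an integer k such that β·γ^w ≡ (βγ)·(α,β)^k modulo (H,G), i.e., (β·w⁻¹γw)·((βγ)·(α,β)^k)⁻¹ ∈ (H,G). -/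
/-!
Modulo `(H,G) = ⁅H, ⊤⁆` every element of `H` is central. As `βγ ∈ H`, this gives
`β·γ^w ≡ (β w⁻¹ β⁻¹ w)·βγ`, so it remains to see that `β w⁻¹ β⁻¹ w` is a power of
`t = (α,β)` modulo `(H,G)`. Since the image of `t` is central, its powers pull back to a normal
subgroup `K`; modulo `K` the generator `β` commutes with `α` (as `t ∈ K`), with itself, and with
`γ` (as `βγ` is central), hence with every `w`.
-/

open Subgroup QuotientGroup
open scoped commutatorElement

section

variable {G : Type*} [Group G]

theorem closure_inv_mul_inv_mul_mul_eq_commutator_top (H : Subgroup G) :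
    closure {x | ∃ h ∈ H, ∃ g : G, x = h⁻¹ * g⁻¹ * h * g} = ⁅H, ⊤⁆ := by
  rw [Subgroup.commutator_def]
  congr 1
  ext x
  constructor
  · rintro ⟨h, hh, g, rfl⟩
    exact ⟨h⁻¹, inv_mem hh, g⁻¹, mem_top _, by simp [commutatorElement_def]⟩
  · rintro ⟨h, hh, g, -, rfl⟩
    exact ⟨h⁻¹, inv_mem hh, g⁻¹, by simp [commutatorElement_def]⟩

theorem commutator_mem_iff_commute {K : Subgroup G} [K.Normal] {x g : G} :
    ⁅x, g⁆ ∈ K ↔ Commute (x : G ⧸ K) g := by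
  rw [← eq_one_iff, ← mk'_apply, map_commutatorElement, commutatorElement_eq_one_iff_mul_comm]
  rfl

theorem mk_mem_center_of_commutator_le {H K : Subgroup G} [K.Normal] (hK : ⁅H, ⊤⁆ ≤ K)
    {h : G} (hh : h ∈ H) : (h : G ⧸ K) ∈ center (G ⧸ K) := by
  refine mem_center_iff.mpr fun g => ?_
  induction g using QuotientGroup.induction_on with
  | H g =>
    exact (commutator_mem_iff_commute.mp (hK (commutator_mem_commutator hh (mem_top g)))).symm

theorem zpowers_normal_of_mem_center {c : G} (hc : c ∈ center G) : (zpowers c).Normal where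
  conj_mem n hn g := by
    rwa [mem_center_iff.mp (zpowers_le.mpr hc hn) g, mul_inv_cancel_right]

theorem MonoidHom.commute_of_closure_eq_top {Q : Type*} [Group Q] (f : G →* Q) {S : Set G}
    (hS : closure S = ⊤) {x : Q} (hx : ∀ s ∈ S, Commute x (f s)) (g : G) : Commute x (f g) := by
  have hle : closure S ≤ (centralizer {x}).comap f :=
    (closure_le _).mpr fun s hs => mem_centralizer_singleton_iff.mpr (hx s hs).symm
  exact (mem_centralizer_singleton_iff.mp (hle (hS ▸ mem_top g))).symm

theorem exists_zpow_eq_mk_commutator {H : Subgroup G} [H.Normal] {a b c : G}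
    (hgen : closure {a, b, c} = ⊤) (hbc : b * c ∈ H) (hab : a⁻¹ * b⁻¹ * a * b ∈ H) (w : G) :
    ∃ k : ℤ, (mk (a⁻¹ * b⁻¹ * a * b) : G ⧸ ⁅H, (⊤ : Subgroup G)⁆) ^ k = mk ⁅b, w⁆ := by
  set t := a⁻¹ * b⁻¹ * a * b
  have : (zpowers (t : G ⧸ ⁅H, (⊤ : Subgroup G)⁆)).Normal :=
    zpowers_normal_of_mem_center (mk_mem_center_of_commutator_le le_rfl hab)
  set K := (zpowers (t : G ⧸ ⁅H, (⊤ : Subgroup G)⁆)).comap (mk' ⁅H, ⊤⁆)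
  have : K.Normal := this.comap _
  have hK : ⁅H, ⊤⁆ ≤ K := fun x hx => by simp [K, (eq_one_iff x).mpr hx]
  have hcomm_a : Commute (b : G ⧸ K) a := by
    have ht : t = ⁅a⁻¹, b⁻¹⁆ := by simp [t, commutatorElement_def]
    have := commutator_mem_iff_commute.mp (ht ▸ mem_zpowers _ : ⁅a⁻¹, b⁻¹⁆ ∈ K)
    rw [mk_inv, mk_inv, Commute.inv_inv_iff] at this
    exact this.symm
  have hcomm_c : Commute (b : G ⧸ K) c := by
    have : Commute (b : G ⧸ K) (b * c : G) :=
      mem_center_iff.mp (mk_mem_center_of_commutator_le hK hbc) b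
    rw [mk_mul] at this
    simpa using (Commute.refl (b : G ⧸ K)).inv_right.mul_right this
  have hgens : ∀ s ∈ ({a, b, c} : Set G), Commute (b : G ⧸ K) (mk' K s) := by
    simp only [Set.mem_insert_iff, Set.mem_singleton_iff, forall_eq_or_imp, forall_eq, mk'_apply]
    exact ⟨hcomm_a, Commute.refl _, hcomm_c⟩
  exact mem_zpowers_iff.mp <|
    commutator_mem_iff_commute.mpr ((mk' K).commute_of_closure_eq_top hgen hgens w)

theorem mul_conj_mul_inv_mem_commutator {H : Subgroup G} [H.Normal] {b c w t : G} {k : ℤ}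
    (hbc : b * c ∈ H) (hk : (mk t : G ⧸ ⁅H, (⊤ : Subgroup G)⁆) ^ k = mk ⁅b, w⁻¹⁆) :
    b * (w⁻¹ * c * w) * ((b * c) * t ^ k)⁻¹ ∈ ⁅H, (⊤ : Subgroup G)⁆ := by
  have hz := mk_mem_center_of_commutator_le (K := ⁅H, (⊤ : Subgroup G)⁆) le_rfl hbc
  have e : b * (w⁻¹ * c * w) = ⁅b, w⁻¹⁆ * (w⁻¹ * (b * c) * w) := by
    simp only [commutatorElement_def]; group
  have hconj : (mk (w⁻¹ * (b * c) * w) : G ⧸ ⁅H, (⊤ : Subgroup G)⁆) = mk (b * c) := by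
    rw [mk_mul, mk_mul, mk_inv, mul_assoc, ← mem_center_iff.mp hz, inv_mul_cancel_left]
  rw [← eq_one_iff, mk_mul, mk_inv, mul_inv_eq_one, e, mk_mul _ ⁅b, w⁻¹⁆, hconj,
    mk_mul _ (b * c), mk_zpow, hk]
  exact mem_center_iff.mp hz _

end

theorem FreeGroup.closure_of_fin_three_eq_top :
    closure {FreeGroup.of (0 : Fin 3), FreeGroup.of 1, FreeGroup.of 2} = ⊤ := by
  rw [← FreeGroup.closure_range_of]
  congr 1
  ext x
  simp [Fin.exists_fin_succ, eq_comm]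

/-- In the free group `G` on `α, β, γ`, with `H` the normal closure of
`{βγ, (α,β)}` and `(H,G)` the subgroup generated by commutators `(h,g)`,
`h ∈ H`, `g ∈ G` (where `(x,y) = x⁻¹y⁻¹xy`), for every `w ∈ G` there is an
integer `k` with `β·γ^w ≡ (βγ)·(α,β)^k mod (H,G)`. -/
theorem beta_gamma_conjugate_congruence (w : FreeGroup (Fin 3)) :
    let α := FreeGroup.of (0 : Fin 3)
    let β := FreeGroup.of (1 : Fin 3)
    let γ := FreeGroup.of (2 : Fin 3)
    let H := Subgroup.normalClosure {β * γ, α⁻¹ * β⁻¹ * α * β}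
    let HG := Subgroup.closure
      {x : FreeGroup (Fin 3) | ∃ h ∈ H, ∃ g : FreeGroup (Fin 3), x = h⁻¹ * g⁻¹ * h * g}
    ∃ k : ℤ, (β * (w⁻¹ * γ * w)) * ((β * γ) * (α⁻¹ * β⁻¹ * α * β) ^ k)⁻¹ ∈ HG := by
  intro α β γ H HG
  have hbc : β * γ ∈ H := subset_normalClosure (Set.mem_insert _ _)
  have hab : α⁻¹ * β⁻¹ * α * β ∈ H := subset_normalClosure (Set.mem_insert_of_mem _ rfl)
  obtain ⟨k, hk⟩ :=
    exists_zpow_eq_mk_commutator FreeGroup.closure_of_fin_three_eq_top hbc hab w⁻¹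
  refine ⟨k, ?_⟩
  rw [show HG = ⁅H, ⊤⁆ from closure_inv_mul_inv_mul_mul_eq_commutator_top H]
  exact mul_conj_mul_inv_mem_commutator hbc hk
end

section
/- Let h < 0, R = √(h(h−1)), and let γ : [0,2π] → ℝ² be the counterclockwise parametrization γ(t) = (R cos t, h + R sin t) of the oval {H = h} (along which 2y − 1 ≠ 0). Then the line integrals of the five 1-forms ω₁,…,ω₅ along γ are: ∫_γ ω₁ = 2πh(h−1), ∫_γ ω₂ = 0, ∫_γ ω₃ = 2πh², ∫_γ ω₄ = 0, ∫_γ ω₅ = 0. Consequently, for any λ₁,…,λ₅ ∈ ℝ, ∫_γ (λ₁ω₁ + λ₂ω₂ + λ₃ω₃ + λ₄ω₄ + λ₅ω₅) = 2πh[h(λ₁ + λ₃) − λ₁]; up to normalization and orientation this is the first Melnikov function M₁(h) = −2πh[h(λ₁+λ₃) − λ₁] of the first period annulus. -/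
/-!
`γ` runs along the oval `x² + y² = h(2y − 1)`, and its velocity at `(x, y)` is `(h − y, x)`. Hence
each `ωᵢ(γ')` can be written, with `D = 2y − 1`, as `α + βy + p/D + q/D² + x·G(y)`. The term
`x·G(y) = G(y)·dy/dt` integrates to zero over a period. Along `γ`, `D = (2h − 1) + 2R sin t` with
`(2h − 1)² − (2R)² = 1`, and `∫ dt/D = −2π`, `∫ dt/D² = 2π(1 − 2h)` come from the antiderivative
`(2 arctan (b cos t / (c − a − b sin t)) − t) / c` of `1 / (a + b sin t)`, where `c² = a² − b²`.
-/

open Real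

open Set intervalIntegral
open MeasureTheory (volume)

section SineDenominator

variable {a b c : ℝ}

lemma add_mul_sin_neg (ha : a < 0) (hab : b ^ 2 < a ^ 2) (t : ℝ) : a + b * sin t < 0 := by
  nlinarith [sin_sq_le_one t, sq_nonneg (b * sin t), sq_nonneg b, mul_self_nonneg (a + b * sin t)]

/-- Unlike the substitution `u = tan (t / 2)`, this antiderivative is smooth on all of `ℝ`:
the denominator `c - a - b * sin t` stays positive. -/
lemma hasDerivAt_arctan_div_sub_sin (ha : a < 0) (hc : 0 < c) (habc : b ^ 2 + c ^ 2 = a ^ 2)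
    (t : ℝ) :
    HasDerivAt (fun t => (2 * arctan (b * cos t / (c - a - b * sin t)) - t) / c)
      (a + b * sin t)⁻¹ t := by
  have hD : a + b * sin t < 0 := add_mul_sin_neg ha (by nlinarith) t
  have hv : 0 < c - a - b * sin t := by linarith
  have hnorm : (c - a - b * sin t) ^ 2 + (b * cos t) ^ 2 = 2 * (a - c) * (a + b * sin t) := by
    linear_combination b ^ 2 * sin_sq_add_cos_sq t + habc
  have hu := (hasDerivAt_cos t).const_mul b
  have hw := ((hasDerivAt_sin t).const_mul b).const_sub (c - a)
  refine (((hu.div hw hv.ne').arctan.const_mul 2).sub (hasDerivAt_id t)).div_const c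
    |>.congr_deriv ?_
  rw [Pi.div_apply, div_pow, one_add_div (pow_ne_zero 2 hv.ne'), hnorm]
  have hac : a - c ≠ 0 := by linarith
  have hD' := hD.ne
  field_simp
  linear_combination b ^ 2 * sin_sq_add_cos_sq t + habc

lemma continuous_inv_add_mul_sin (ha : a < 0) (hab : b ^ 2 < a ^ 2) :
    Continuous fun t => (a + b * sin t)⁻¹ :=
  (continuous_const.add (continuous_const.mul continuous_sin)).inv₀ fun t =>
    (add_mul_sin_neg ha hab t).ne

lemma integral_inv_add_mul_sin (ha : a < 0) (hc : 0 < c) (habc : b ^ 2 + c ^ 2 = a ^ 2) :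
    ∫ t in 0..2 * π, (a + b * sin t)⁻¹ = -(2 * π / c) := by
  rw [integral_eq_sub_of_hasDerivAt (fun t _ => hasDerivAt_arctan_div_sub_sin ha hc habc t)
    ((continuous_inv_add_mul_sin ha (by nlinarith)).intervalIntegrable _ _)]
  simp only [cos_two_pi, sin_two_pi, cos_zero, sin_zero]
  ring

lemma hasDerivAt_cos_div_add_mul_sin (ha : a < 0) (hc : 0 < c) (habc : b ^ 2 + c ^ 2 = a ^ 2)
    (t : ℝ) :
    HasDerivAt
      (fun t => (b * cos t / (a + b * sin t)
        + a * ((2 * arctan (b * cos t / (c - a - b * sin t)) - t) / c)) / c ^ 2)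
      ((a + b * sin t)⁻¹ ^ 2) t := by
  have hD : a + b * sin t ≠ 0 := (add_mul_sin_neg ha (by nlinarith) t).ne
  have hu := (hasDerivAt_cos t).const_mul b
  have hw := ((hasDerivAt_sin t).const_mul b).const_add a
  refine ((hu.div hw hD).add ((hasDerivAt_arctan_div_sub_sin ha hc habc t).const_mul a)).div_const
    (c ^ 2) |>.congr_deriv ?_
  field_simp
  linear_combination -(b ^ 2 * sin_sq_add_cos_sq t + habc)

lemma integral_inv_add_mul_sin_sq (ha : a < 0) (hc : 0 < c) (habc : b ^ 2 + c ^ 2 = a ^ 2) :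
    ∫ t in 0..2 * π, (a + b * sin t)⁻¹ ^ 2 = -(2 * π * a / c ^ 3) := by
  rw [integral_eq_sub_of_hasDerivAt (fun t _ => hasDerivAt_cos_div_add_mul_sin ha hc habc t)
    (((continuous_inv_add_mul_sin ha (by nlinarith)).pow 2).intervalIntegrable _ _)]
  simp only [cos_two_pi, sin_two_pi, cos_zero, sin_zero]
  field_simp
  ring

end SineDenominator

section Oval

variable {h R : ℝ}

lemma two_mul_sub_one_neg_of_mem_oval (hh : h < 0) {x y : ℝ}
    (hxy : x ^ 2 + y ^ 2 = h * (2 * y - 1)) : 2 * y - 1 < 0 := by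
  nlinarith [sq_nonneg x, sq_nonneg (y - 1 / 2)]

lemma oval_param_sq_add_sq (hR : R ^ 2 = h * (h - 1)) (t : ℝ) :
    (R * cos t) ^ 2 + (h + R * sin t) ^ 2 = h * (2 * (h + R * sin t) - 1) := by
  linear_combination R ^ 2 * sin_sq_add_cos_sq t + hR

lemma oval_param_lt_half (hh : h < 0) (hR : R ^ 2 = h * (h - 1)) (t : ℝ) :
    h + R * sin t < 1 / 2 := by
  linarith [two_mul_sub_one_neg_of_mem_oval hh (oval_param_sq_add_sq hR t)]

lemma integral_comp_oval_param_mul_cos (hh : h < 0) (hR : R ^ 2 = h * (h - 1)) {G : ℝ → ℝ}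
    (hG : ContinuousOn G (Iio (1 / 2))) :
    ∫ t in 0..2 * π, G (h + R * sin t) * (R * cos t) = 0 := by
  have hmaps : (fun t => h + R * sin t) '' uIcc 0 (2 * π) ⊆ Iio (1 / 2) := by
    rintro _ ⟨t, -, rfl⟩
    exact oval_param_lt_half hh hR t
  have := integral_comp_mul_deriv' (g := G)
    (fun t _ => ((hasDerivAt_sin t).const_mul R).const_add h)
    (continuous_const.mul continuous_cos).continuousOn (hG.mono hmaps)
  simpa [sin_two_pi] using this

lemma integral_oval_param_decomposition (hh : h < 0) (hR : R ^ 2 = h * (h - 1)) {G : ℝ → ℝ}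
    (hG : ContinuousOn G (Iio (1 / 2))) (α β p q : ℝ) :
    ∫ t in 0..2 * π, (α + β * h + β * R * sin t
      + (p * (2 * h - 1 + 2 * R * sin t)⁻¹ + q * (2 * h - 1 + 2 * R * sin t)⁻¹ ^ 2)
      + G (h + R * sin t) * (R * cos t))
      = 2 * π * (α + β * h - p + (1 - 2 * h) * q) := by
  have habc : (2 * R) ^ 2 + 1 ^ 2 = (2 * h - 1) ^ 2 := by linear_combination 4 * hR
  have ha : 2 * h - 1 < 0 := by linarith
  have hinv := continuous_inv_add_mul_sin (b := 2 * R) ha (by linarith)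
  have hA : IntervalIntegrable (fun t => β * R * sin t) volume 0 (2 * π) :=
    (continuous_sin.const_mul _).intervalIntegrable _ _
  have hB₁ : IntervalIntegrable (fun t => p * (2 * h - 1 + 2 * R * sin t)⁻¹) volume 0 (2 * π) :=
    (hinv.const_mul p).intervalIntegrable _ _
  have hB₂ : IntervalIntegrable (fun t => q * (2 * h - 1 + 2 * R * sin t)⁻¹ ^ 2) volume 0
      (2 * π) :=
    ((hinv.pow 2).const_mul q).intervalIntegrable _ _
  have hC : IntervalIntegrable (fun t => G (h + R * sin t) * (R * cos t)) volume 0 (2 * π) :=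
    ((hG.comp_continuous (by fun_prop) (oval_param_lt_half hh hR)).mul
      (by fun_prop)).intervalIntegrable _ _
  rw [integral_add ((intervalIntegrable_const.add hA).add (hB₁.add hB₂)) hC,
    integral_add (intervalIntegrable_const.add hA) (hB₁.add hB₂), integral_add hB₁ hB₂,
    integral_add intervalIntegrable_const hA, integral_const, integral_const_mul, integral_sin,
    integral_const_mul, integral_const_mul, integral_inv_add_mul_sin ha one_pos habc,
    integral_inv_add_mul_sin_sq ha one_pos habc, integral_comp_oval_param_mul_cos hh hR hG]
  simp only [cos_two_pi, cos_zero, smul_eq_mul]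
  ring

/-- `(h - y, x)` is the velocity of `t ↦ (R cos t, h + R sin t)` at the point `(x, y)`. -/
theorem oval_lineIntegral_eq (hh : h < 0) (hR : R ^ 2 = h * (h - 1)) {P Q : ℝ → ℝ → ℝ}
    {G : ℝ → ℝ} {α β p q : ℝ} (hG : ContinuousOn G (Iio (1 / 2)))
    (hPQ : ∀ x y, x ^ 2 + y ^ 2 = h * (2 * y - 1) → 2 * y - 1 ≠ 0 →
      P x y * (h - y) + Q x y * x = α + β * y + p / (2 * y - 1) + q / (2 * y - 1) ^ 2 + x * G y) :
    ∫ t in 0..2 * π, (P (R * cos t) (h + R * sin t) * deriv (fun t => R * cos t) t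
        + Q (R * cos t) (h + R * sin t) * deriv (fun t => h + R * sin t) t)
      = 2 * π * (α + β * h - p + (1 - 2 * h) * q) := by
  refine (integral_congr fun t _ => ?_).trans (integral_oval_param_decomposition hh hR hG α β p q)
  have hx' : deriv (fun t => R * cos t) t = h - (h + R * sin t) := by
    rw [((hasDerivAt_cos t).const_mul R).deriv]
    ring
  have hy' : deriv (fun t => h + R * sin t) t = R * cos t :=
    (((hasDerivAt_sin t).const_mul R).const_add h).deriv
  have hxy := oval_param_sq_add_sq hR t
  rw [hx', hy', hPQ _ _ hxy (two_mul_sub_one_neg_of_mem_oval hh hxy).ne, div_eq_mul_inv q,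
    ← inv_pow]
  ring

end Oval

section OneForms

variable {h x y : ℝ}

lemma omega₁_tangent_eq (hD : 2 * y - 1 ≠ 0) (hxy : x ^ 2 + y ^ 2 = h * (2 * y - 1)) :
    -y / (2 * y - 1) ^ 2 * (h - y) + x / (2 * y - 1) ^ 2 * x
      = h / 2 / (2 * y - 1) - h / 2 / (2 * y - 1) ^ 2 := by
  generalize hd : 2 * y - 1 = d at *
  field_simp
  subst hd
  linear_combination 2 * hxy

lemma omega₂_tangent_eq (hD : 2 * y - 1 ≠ 0) (hxy : x ^ 2 + y ^ 2 = h * (2 * y - 1)) :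
    (x ^ 2 + y ^ 2) / (2 * y - 1) ^ 2 * x = x * (h / (2 * y - 1)) := by
  rw [hxy]
  field_simp

lemma omega₃_tangent_eq (hD : 2 * y - 1 ≠ 0) (hxy : x ^ 2 + y ^ 2 = h * (2 * y - 1)) :
    -(x ^ 2 + y ^ 2) / (2 * y - 1) ^ 2 * (h - y) = h / 2 - h * (2 * h - 1) / 2 / (2 * y - 1) := by
  rw [hxy]
  field_simp
  ring

lemma omega₄_tangent_eq (hD : 2 * y - 1 ≠ 0) (hxy : x ^ 2 + y ^ 2 = h * (2 * y - 1)) :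
    2 * x * y / (2 * y - 1) ^ 2 * (h - y) + (x ^ 2 - y ^ 2) / (2 * y - 1) ^ 2 * x
      = x * ((h - 1) / (2 * y - 1) ^ 2 + 2 * (h - 1) / (2 * y - 1) - 1) := by
  generalize hd : 2 * y - 1 = d at *
  field_simp
  subst hd
  linear_combination x * hxy

lemma omega₅_tangent_eq (hD : 2 * y - 1 ≠ 0) (hxy : x ^ 2 + y ^ 2 = h * (2 * y - 1)) :
    -(x ^ 2 - y ^ 2) / (2 * y - 1) ^ 2 * (h - y) + 2 * x * y / (2 * y - 1) ^ 2 * x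
      = 2 * h - 1 - y - (h - 1) * (2 * h - 3) / 2 / (2 * y - 1)
        + (h - 1) / 2 / (2 * y - 1) ^ 2 := by
  generalize hd : 2 * y - 1 = d at *
  field_simp
  subst hd
  linear_combination (6 * y - 2 * h) * hxy

end OneForms

/-- First Melnikov function of the first period annulus: for `h < 0`, along the
counterclockwise parametrization `γ(t) = (R cos t, h + R sin t)`,
`R = √(h(h−1))`, of the oval `{H = h}` (on which `2y − 1 ≠ 0`), the integrals
of `ω₁, …, ω₅` are `2πh(h−1), 0, 2πh², 0, 0`; hence
`∫ λ₁ω₁ + ⋯ + λ₅ω₅ = 2πh[h(λ₁+λ₃) − λ₁]`. -/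
theorem first_melnikov_first_annulus (h : ℝ) (hh : h < 0) (l1 l2 l3 l4 l5 : ℝ) :
    let R := Real.sqrt (h * (h - 1))
    let γ₁ : ℝ → ℝ := fun t => R * Real.cos t
    let γ₂ : ℝ → ℝ := fun t => h + R * Real.sin t
    let lineInt : (ℝ → ℝ → ℝ) → (ℝ → ℝ → ℝ) → ℝ := fun P Q =>
      ∫ t in (0 : ℝ)..(2 * π),
        (P (γ₁ t) (γ₂ t) * deriv γ₁ t + Q (γ₁ t) (γ₂ t) * deriv γ₂ t)
    (∀ t : ℝ, 2 * γ₂ t - 1 ≠ 0)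
    -- ω₁ = (x dy − y dx)/(2y−1)²
    ∧ lineInt (fun _ y => -y / (2 * y - 1) ^ 2) (fun x y => x / (2 * y - 1) ^ 2)
        = 2 * π * h * (h - 1)
    -- ω₂ = (x²+y²) dy/(2y−1)²
    ∧ lineInt (fun _ _ => 0) (fun x y => (x ^ 2 + y ^ 2) / (2 * y - 1) ^ 2) = 0
    -- ω₃ = −(x²+y²) dx/(2y−1)²
    ∧ lineInt (fun x y => -(x ^ 2 + y ^ 2) / (2 * y - 1) ^ 2) (fun _ _ => 0)
        = 2 * π * h ^ 2
    -- ω₄ = ((x²−y²) dy + 2xy dx)/(2y−1)²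
    ∧ lineInt (fun x y => 2 * x * y / (2 * y - 1) ^ 2)
        (fun x y => (x ^ 2 - y ^ 2) / (2 * y - 1) ^ 2) = 0
    -- ω₅ = (2xy dy − (x²−y²) dx)/(2y−1)²
    ∧ lineInt (fun x y => -(x ^ 2 - y ^ 2) / (2 * y - 1) ^ 2)
        (fun x y => 2 * x * y / (2 * y - 1) ^ 2) = 0
    -- the combination λ₁ω₁ + λ₂ω₂ + λ₃ω₃ + λ₄ω₄ + λ₅ω₅
    ∧ lineInt
        (fun x y => l1 * (-y / (2 * y - 1) ^ 2)
          + l3 * (-(x ^ 2 + y ^ 2) / (2 * y - 1) ^ 2)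
          + l4 * (2 * x * y / (2 * y - 1) ^ 2)
          + l5 * (-(x ^ 2 - y ^ 2) / (2 * y - 1) ^ 2))
        (fun x y => l1 * (x / (2 * y - 1) ^ 2)
          + l2 * ((x ^ 2 + y ^ 2) / (2 * y - 1) ^ 2)
          + l4 * ((x ^ 2 - y ^ 2) / (2 * y - 1) ^ 2)
          + l5 * (2 * x * y / (2 * y - 1) ^ 2))
      = 2 * π * h * (h * (l1 + l3) - l1) := by
  intro R γ₁ γ₂ lineInt
  have hR : R ^ 2 = h * (h - 1) := sq_sqrt (by nlinarith)
  have oval : ∀ {P Q v} G α β p q, ContinuousOn G (Iio (1 / 2)) →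
      2 * π * (α + β * h - p + (1 - 2 * h) * q) = v →
      (∀ x y, x ^ 2 + y ^ 2 = h * (2 * y - 1) → 2 * y - 1 ≠ 0 →
        P x y * (h - y) + Q x y * x = α + β * y + p / (2 * y - 1) + q / (2 * y - 1) ^ 2 + x * G y) →
      lineInt P Q = v :=
    fun _ _ _ _ _ hG hv hPQ => hv ▸ oval_lineIntegral_eq hh hR hG hPQ
  clear_value lineInt
  have hG : ∀ c₂ c₄ : ℝ, ContinuousOn (fun y => c₂ * (h / (2 * y - 1))
      + c₄ * ((h - 1) / (2 * y - 1) ^ 2 + 2 * (h - 1) / (2 * y - 1) - 1)) (Iio (1 / 2)) := by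
    intro c₂ c₄
    fun_prop (disch := intro y hy; simp_all; linarith)
  refine ⟨fun t => (two_mul_sub_one_neg_of_mem_oval hh (oval_param_sq_add_sq hR t)).ne,
    ?_, ?_, ?_, ?_, ?_, ?_⟩
  · exact oval (fun _ => 0) 0 0 (h / 2) (-(h / 2)) continuousOn_const (by ring)
      fun x y hxy hD => by linear_combination omega₁_tangent_eq hD hxy
  · exact oval _ 0 0 0 0 (hG 1 0) (by ring)
      fun x y hxy hD => by linear_combination omega₂_tangent_eq hD hxy
  · exact oval (fun _ => 0) (h / 2) 0 (-(h * (2 * h - 1) / 2)) 0 continuousOn_const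
      (by ring) fun x y hxy hD => by linear_combination omega₃_tangent_eq hD hxy
  · exact oval _ 0 0 0 0 (hG 0 1) (by ring)
      fun x y hxy hD => by linear_combination omega₄_tangent_eq hD hxy
  · exact oval (fun _ => 0) (2 * h - 1) (-1) (-((h - 1) * (2 * h - 3) / 2)) ((h - 1) / 2)
      continuousOn_const (by ring) fun x y hxy hD => by linear_combination omega₅_tangent_eq hD hxy
  · exact oval _ (l3 * (h / 2) + l5 * (2 * h - 1)) (-l5)
      (l1 * (h / 2) - l3 * (h * (2 * h - 1) / 2) - l5 * ((h - 1) * (2 * h - 3) / 2))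
      (-(l1 * (h / 2)) + l5 * ((h - 1) / 2)) (hG l2 l4) (by ring) fun x y hxy hD => by
        linear_combination l1 * omega₁_tangent_eq hD hxy + l2 * omega₂_tangent_eq hD hxy
          + l3 * omega₃_tangent_eq hD hxy + l4 * omega₄_tangent_eq hD hxy
          + l5 * omega₅_tangent_eq hD hxy
end

section
/- Let h ∈ ℂ ∖ {0,1}, a = −ih, b = −i(h−1), and let λ₂, λ₅ ∈ ℂ. Define the rational functions F₂(z) = (h/2)(−1/z + 1/(z−a) + 1/(z−b)) and F₅(z) = 1/2 − i(h−1)(1/z − 1/(z−a) + 1/(z−b)) − (h(h−1)/2)(1/z² + 1/(z−a)²) − ((h−1)²/2)·1/(z−b)². Then for every radius r > 0 with r < min(|a|, |a−b|), the counterclockwise contour integral over the circle |z − a| = r satisfies (1/(2πi))·∮ (λ₂F₂(z) + λ₅F₅(z)) dz = hλ₂/2 + i(h−1)λ₅; and for every r > 0 with r < min(|b|, |a−b|), the integral over the circle |z − b| = r satisfies (1/(2πi))·∮ (λ₂F₂(z) + λ₅F₅(z)) dz = hλ₂/2 − i(h−1)λ₅. -/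
/-!
Up to a constant, `λ₂F₂ + λ₅F₅` is a sum of principal parts `α/(z - q) + β/(z - q)²` at the
three poles `0`, `a`, `b`. On a circle around one pole that leaves the other two outside, the
constant and the outer principal parts integrate to zero by Cauchy's theorem, and so does the
double-pole term at the centre, which has a primitive. What survives is `2πi` times the
coefficient of the simple pole at the centre, read off from the partial fraction decomposition.
-/

open Complex Metric

noncomputable def polePart (q α β z : ℂ) : ℂ := α * (z - q)⁻¹ + β * ((z - q) ^ 2)⁻¹

section

variable {c q : ℂ} {r : ℝ}

theorem differentiableOn_polePart {s : Set ℂ} (hq : q ∉ s) (α β : ℂ) :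
    DifferentiableOn ℂ (polePart q α β) s := by
  have hne : ∀ z ∈ s, z - q ≠ 0 := fun z hz => sub_ne_zero.2 (ne_of_mem_of_not_mem hz hq)
  unfold polePart
  fun_prop (disch := simp_all)

theorem circleIntegrable_polePart (hr : 0 ≤ r) (hq : q ∉ sphere c r) (α β : ℂ) :
    CircleIntegrable (polePart q α β) c r :=
  ((differentiableOn_polePart hq α β).continuousOn).circleIntegrable hr

theorem circleIntegral_sub_sq_inv (c q : ℂ) (r : ℝ) : (∮ z in C(c, r), ((z - q) ^ 2)⁻¹) = 0 := by
  simpa [zpow_neg] using circleIntegral.integral_sub_zpow_of_ne (n := -2) (by decide) c q r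

theorem circleIntegral_polePart_of_mem_ball (hq : q ∈ ball c r) (α β : ℂ) :
    (∮ z in C(c, r), polePart q α β z) = 2 * Real.pi * I * α := by
  have hq' : q ∉ sphere c |r| := by
    rw [abs_of_pos (pos_of_mem_ball hq)]; exact fun h => (mem_ball.1 hq).ne (mem_sphere.1 h)
  have hinv : CircleIntegrable (fun z => (z - q)⁻¹) c r :=
    circleIntegrable_sub_inv_iff.2 (Or.inr hq')
  have hsq : CircleIntegrable (fun z => (z - q) ^ (-2 : ℤ)) c r :=
    circleIntegrable_sub_zpow_iff.2 (Or.inr (Or.inr hq'))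
  simp only [zpow_neg, zpow_ofNat] at hsq
  unfold polePart
  rw [circleIntegral.integral_add (f := fun z => α * (z - q)⁻¹)
      (g := fun z => β * ((z - q) ^ 2)⁻¹) hinv.const_fun_smul hsq.const_fun_smul,
    circleIntegral.integral_const_mul, circleIntegral.integral_const_mul,
    circleIntegral.integral_sub_inv_of_mem_ball hq, circleIntegral_sub_sq_inv, mul_zero,
    add_zero, mul_comm]

theorem circleIntegral_polePart_of_notMem_closedBall (hr : 0 ≤ r) (hq : q ∉ closedBall c r)
    (α β : ℂ) : (∮ z in C(c, r), polePart q α β z) = 0 :=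
  DiffContOnCl.circleIntegral_eq_zero hr <| DifferentiableOn.diffContOnCl <|
    differentiableOn_polePart (fun h => hq (closure_ball_subset_closedBall h)) α β

theorem circleIntegral_const_add_sum_polePart {ι : Type*} {s : Finset ι} {j : ι} (hj : j ∈ s)
    (e : ℂ) (p α β : ι → ℂ) (hr : 0 < r) (hp : ∀ i ∈ s, i ≠ j → r < ‖p i - p j‖) :
    (∮ z in C(p j, r), e + ∑ i ∈ s, polePart (p i) (α i) (β i) z) = 2 * Real.pi * I * α j := by
  have hfar : ∀ i ∈ s, i ≠ j → p i ∉ closedBall (p j) r := fun i hi hij hcl =>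
    (mem_closedBall_iff_norm.1 hcl).not_gt (hp i hi hij)
  have hint : ∀ i ∈ s, CircleIntegrable (polePart (p i) (α i) (β i)) (p j) r := by
    refine fun i hi => circleIntegrable_polePart hr.le (fun hs => ?_) (α i) (β i)
    obtain rfl | hij := eq_or_ne i j
    · exact hr.ne ((dist_self _).symm.trans (mem_sphere.1 hs))
    · exact hfar i hi hij (sphere_subset_closedBall hs)
  rw [circleIntegral.integral_add (circleIntegrable_const e _ r) (.fun_sum s hint),
    circleIntegral.integral_fun_sum hint,
    (diffContOnCl_const (c := e)).circleIntegral_eq_zero hr.le, zero_add,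
    Finset.sum_eq_single_of_mem j hj fun i hi hij =>
      circleIntegral_polePart_of_notMem_closedBall hr.le (hfar i hi hij) (α i) (β i)]
  exact circleIntegral_polePart_of_mem_ball (mem_ball_self hr) (α j) (β j)

end

theorem residues_of_perturbation_form_general (h : ℂ) (l2 l5 : ℂ) :
    let a : ℂ := -I * h
    let b : ℂ := -I * (h - 1)
    let F2 : ℂ → ℂ := fun z => (h / 2) * (-(1 / z) + 1 / (z - a) + 1 / (z - b))
    let F5 : ℂ → ℂ := fun z => 1 / 2
      - I * (h - 1) * (1 / z - 1 / (z - a) + 1 / (z - b))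
      - (h * (h - 1) / 2) * (1 / z ^ 2 + 1 / (z - a) ^ 2)
      - ((h - 1) ^ 2 / 2) * (1 / (z - b) ^ 2)
    (∀ r : ℝ, 0 < r → r < min ‖a‖ ‖a - b‖ →
      (1 / (2 * Real.pi * I)) * (∮ z in C(a, r), (l2 * F2 z + l5 * F5 z))
        = h * l2 / 2 + I * (h - 1) * l5)
    ∧ (∀ r : ℝ, 0 < r → r < min ‖b‖ ‖a - b‖ →
      (1 / (2 * Real.pi * I)) * (∮ z in C(b, r), (l2 * F2 z + l5 * F5 z))
        = h * l2 / 2 - I * (h - 1) * l5) := by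
  intro a b F2 F5
  let p : Fin 3 → ℂ := ![0, a, b]
  let α : Fin 3 → ℂ := ![-(l2 * h / 2) - I * (h - 1) * l5, h * l2 / 2 + I * (h - 1) * l5,
    h * l2 / 2 - I * (h - 1) * l5]
  let β : Fin 3 → ℂ :=
    ![-(l5 * h * (h - 1) / 2), -(l5 * h * (h - 1) / 2), -(l5 * (h - 1) ^ 2 / 2)]
  have hF : ∀ z, l2 * F2 z + l5 * F5 z = l5 / 2 + ∑ i, polePart (p i) (α i) (β i) z := by
    intro z
    simp only [F2, F5, Fin.sum_univ_three, polePart, p, α, β, Matrix.cons_val_zero,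
      Matrix.cons_val_one, Matrix.cons_val_two, Matrix.head_cons, Matrix.tail_cons, sub_zero,
      one_div]
    ring
  have hres : ∀ j r, 0 < r → (∀ i ≠ j, r < ‖p i - p j‖) →
      (1 / (2 * Real.pi * I)) * (∮ z in C(p j, r), (l2 * F2 z + l5 * F5 z)) = α j := by
    intro j r hr hp
    simp only [hF]
    rw [circleIntegral_const_add_sum_polePart (Finset.mem_univ j) _ _ _ _ hr fun i _ => hp i,
      one_div, inv_mul_cancel_left₀ two_pi_I_ne_zero]
  refine ⟨fun r hr hra => hres 1 r hr ?_, fun r hr hrb => hres 2 r hr ?_⟩ <;>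
    intro i hi <;> fin_cases i <;> simp_all [p, norm_sub_rev]

/-- Residues of the perturbation form `λ₂F₂ + λ₅F₅` at the punctures
`a = −ih` and `b = −i(h−1)` of the uniformized level curve `Γ_h`: small
counterclockwise circles around `a` and around `b` give
`(2πi)⁻¹ ∮ (λ₂F₂ + λ₅F₅) dz = hλ₂/2 + i(h−1)λ₅` and
`= hλ₂/2 − i(h−1)λ₅` respectively. -/
theorem residues_of_perturbation_form (h : ℂ) (h0 : h ≠ 0) (h1 : h ≠ 1) (l2 l5 : ℂ) :
    let a : ℂ := -I * h
    let b : ℂ := -I * (h - 1)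
    let F2 : ℂ → ℂ := fun z => (h / 2) * (-(1 / z) + 1 / (z - a) + 1 / (z - b))
    let F5 : ℂ → ℂ := fun z => 1 / 2
      - I * (h - 1) * (1 / z - 1 / (z - a) + 1 / (z - b))
      - (h * (h - 1) / 2) * (1 / z ^ 2 + 1 / (z - a) ^ 2)
      - ((h - 1) ^ 2 / 2) * (1 / (z - b) ^ 2)
    (∀ r : ℝ, 0 < r → r < min ‖a‖ ‖a - b‖ →
      (1 / (2 * Real.pi * I)) * (∮ z in C(a, r), (l2 * F2 z + l5 * F5 z))
        = h * l2 / 2 + I * (h - 1) * l5)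
    ∧ (∀ r : ℝ, 0 < r → r < min ‖b‖ ‖a - b‖ →
      (1 / (2 * Real.pi * I)) * (∮ z in C(b, r), (l2 * F2 z + l5 * F5 z))
        = h * l2 / 2 - I * (h - 1) * l5) :=
  residues_of_perturbation_form_general h l2 l5
end

section
/- Let c₁, c₂, c₃ ∈ ℝ, not all zero. Then the function G(h) = c₁(h−1) + c₂h + c₃·(h + h²/2 + log(1−h)) has at most two zeros in the interval (−∞, 0): the set {h < 0 : G(h) = 0} has cardinality at most 2. Consequently every bifurcation function c₁M₁¹ + c₂M₂¹ + c₃M₃¹ of the first period annulus has at most two zeros there, so at most two limit cycles bifurcate from the open period annulus around (0,0). -/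
/-!
`G'(h) = c₁ + c₂ − c₃ h²/(1−h)` and `h²/(1−h)` is strictly decreasing on `(−∞, 0]`, so `G'` has at
most one zero on `(−∞, 0)` unless `c₁ + c₂ = c₃ = 0`, in which case `G ≡ −c₁ ≠ 0`. By Rolle's
theorem, three zeros of `G` would give two zeros of `G'`.
-/

open Set

theorem Set.encard_le_two_of_no_lt_lt {α : Type*} [LinearOrder α] {S : Set α}
    (h : ∀ a ∈ S, ∀ b ∈ S, ∀ c ∈ S, a < b → b < c → False) : S.encard ≤ 2 := by
  by_contra! hS
  obtain ⟨t, htS, ht⟩ := exists_subset_encard_eq (Order.add_one_le_of_lt hS)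
  obtain ⟨F, rfl⟩ := (finite_of_encard_eq_coe ht).exists_finset_coe
  have hF : F.card = 3 := by
    rw [encard_coe_eq_coe_finsetCard] at ht
    exact_mod_cast ht
  set e := F.orderEmbOfFin hF
  exact h (e 0) (htS (F.orderEmbOfFin_mem hF 0)) (e 1) (htS (F.orderEmbOfFin_mem hF 1))
    (e 2) (htS (F.orderEmbOfFin_mem hF 2)) (e.strictMono (by decide)) (e.strictMono (by decide))

theorem encard_zeros_le_two_of_subsingleton_deriv_zeros {f f' : ℝ → ℝ} {s : Set ℝ}
    (hs : s.OrdConnected) (hf : ∀ x ∈ s, HasDerivAt f (f' x) x)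
    (hf' : {x ∈ s | f' x = 0}.Subsingleton) : {x ∈ s | f x = 0}.encard ≤ 2 := by
  have rolle : ∀ a ∈ s, ∀ b ∈ s, a < b → f a = 0 → f b = 0 → ∃ u ∈ Ioo a b, u ∈ s ∧ f' u = 0 := by
    intro a ha b hb hab hfa hfb
    have hderiv : ∀ x ∈ Icc a b, HasDerivAt f (f' x) x := fun x hx => hf x (hs.out ha hb hx)
    obtain ⟨u, hu, hu0⟩ := exists_hasDerivAt_eq_zero hab
      (fun x hx => (hderiv x hx).continuousAt.continuousWithinAt) (hfa.trans hfb.symm)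
      (fun x hx => hderiv x (Ioo_subset_Icc_self hx))
    exact ⟨u, hu, hs.out ha hb (Ioo_subset_Icc_self hu), hu0⟩
  refine encard_le_two_of_no_lt_lt fun a ⟨ha, hfa⟩ b ⟨hb, hfb⟩ c ⟨hc, hfc⟩ hab hbc => ?_
  obtain ⟨u, hu, hus, hu0⟩ := rolle a ha b hb hab hfa hfb
  obtain ⟨v, hv, hvs, hv0⟩ := rolle b hb c hc hbc hfb hfc
  exact (hu.2.trans hv.1).ne (hf' ⟨hus, hu0⟩ ⟨hvs, hv0⟩)

theorem strictAntiOn_sq_div_one_sub : StrictAntiOn (fun x : ℝ => x ^ 2 / (1 - x)) (Iic 0) := by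
  intro u hu v hv huv
  have hu : u ≤ 0 := hu
  have hv : v ≤ 0 := hv
  rw [div_lt_div_iff₀ (by linarith) (by linarith)]
  nlinarith [mul_pos (sub_pos.2 huv) (by nlinarith : 0 < u * v - u - v)]

noncomputable def bifurcationFn (c1 c2 c3 h : ℝ) : ℝ :=
  c1 * (h - 1) + c2 * h + c3 * (h + h ^ 2 / 2 + Real.log (1 - h))

theorem hasDerivAt_bifurcationFn (c1 c2 c3 : ℝ) {x : ℝ} (hx : x < 1) :
    HasDerivAt (bifurcationFn c1 c2 c3) (c1 + c2 - c3 * (x ^ 2 / (1 - x))) x := by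
  have hx' : 1 - x ≠ 0 := by linarith
  have hlog : HasDerivAt (fun h => Real.log (1 - h)) (-1 / (1 - x)) x := by
    simpa using ((hasDerivAt_id x).const_sub 1).log hx'
  have hsq : HasDerivAt (fun h : ℝ => h ^ 2 / 2) x x := by
    simpa using (hasDerivAt_pow 2 x).div_const 2
  have h := ((((hasDerivAt_id' x).sub_const 1).const_mul c1).add
    ((hasDerivAt_id' x).const_mul c2)).add
    ((((hasDerivAt_id' x).add hsq).add hlog).const_mul c3)
  refine h.congr_deriv ?_
  field_simp
  ring

theorem subsingleton_deriv_bifurcationFn_zeros {c1 c2 c3 : ℝ} (hc : ¬(c1 + c2 = 0 ∧ c3 = 0)) :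
    {x ∈ Iio 0 | c1 + c2 - c3 * (x ^ 2 / (1 - x)) = 0}.Subsingleton := by
  rintro u ⟨hu, hu0⟩ v ⟨hv, hv0⟩
  have hc3 : c3 ≠ 0 := fun hc3 => hc ⟨by simpa [hc3] using hu0, hc3⟩
  exact strictAntiOn_sq_div_one_sub.injOn (mem_Iic.2 hu.le) (mem_Iic.2 hv.le)
    (mul_left_cancel₀ hc3 (by linarith))

/-- Every nontrivial bifurcation function
`G(h) = c₁(h−1) + c₂h + c₃(h + h²/2 + log(1−h))` of the first period annulus
has at most two zeros in `(−∞, 0)`; hence at most two limit cycles bifurcate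
from the open period annulus around `(0,0)`. -/
theorem bifurcation_function_at_most_two_zeros (c1 c2 c3 : ℝ)
    (hc : ¬(c1 = 0 ∧ c2 = 0 ∧ c3 = 0)) :
    {h : ℝ | h < 0 ∧
        c1 * (h - 1) + c2 * h + c3 * (h + h ^ 2 / 2 + Real.log (1 - h)) = 0}.encard
      ≤ 2 := by
  change {h | h < 0 ∧ bifurcationFn c1 c2 c3 h = 0}.encard ≤ 2
  by_cases hdeg : c1 + c2 = 0 ∧ c3 = 0
  · obtain ⟨hc12, hc3⟩ := hdeg
    have hc1 : c1 ≠ 0 := fun hc1 => hc ⟨hc1, by linarith, hc3⟩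
    have hconst : ∀ h, bifurcationFn c1 c2 c3 h = -c1 := fun h => by
      simp only [bifurcationFn, hc3, eq_neg_of_add_eq_zero_right hc12]
      ring
    simp [hconst, hc1]
  · exact encard_zeros_le_two_of_subsingleton_deriv_zeros ordConnected_Iio
      (fun x hx => hasDerivAt_bifurcationFn c1 c2 c3 (lt_trans hx zero_lt_one))
      (subsingleton_deriv_bifurcationFn_zeros hdeg)
end

section
/- Let λ₁, …, λ₅ : ℂ → ℂ be functions analytic at 0 with λⱼ(0) = 0 for all j, and define v¹(ε) = (λ₁(ε), λ₃(ε), λ₂(ε)λ₅(ε)) ∈ ℂ³ and v²(ε) = (λ₁(ε)+λ₃(ε)+λ₁(ε)λ₂(ε), λ₅(ε), λ₃(ε)λ₄(ε)) ∈ ℂ³. Suppose there are nonzero vectors c¹ = (c₁¹, c₂¹, c₃¹) and c² = (c₁², c₂², c₃²) in ℂ³ and scalar functions μ, ν defined for small ε ≠ 0 such that μ(ε)·v¹(ε) → c¹ and ν(ε)·v²(ε) → c² as ε → 0. Then at least one of the following holds: (i) c₁² = c₃² = 0; (ii) c₁¹ + c₂¹ = 0 and c₃¹ = 0; (iii) c₃¹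 = 0 and c₃² = 0. In other words, the exceptional divisor of the blow-up of the product of Bautin ideals 𝓑₁ × 𝓑₂ is contained in the union of these three subsets of ℙ² × ℙ². -/
/-!
Only the relative sizes of the components along the arc matter. If `μ f` and `μ g` converge and
`lim μ g ≠ 0`, then `f = O(g)`; if `g = o(f)` and `μ f` converges, then `μ g → 0`.

If `c¹₃ ≠ 0`, then `λ₁, λ₃ = O(λ₂λ₅) = o(λ₅)` because `λ₂ → 0`, so `λ₁ + λ₃ + λ₁λ₂` and `λ₃λ₄`
are both `o(λ₅)`, while `ν λ₅` converges: this is (i). If `c¹₃ = 0` and `c¹₁ + c¹₂ ≠ 0`, then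
`λ₁, λ₃ = O(λ₁ + λ₃)`; hence `λ₁λ₂ = o(λ₁ + λ₃)`, so `λ₁ + λ₃ = O(λ₁ + λ₃ + λ₁λ₂)`, and
`λ₃λ₄ = o(λ₁ + λ₃ + λ₁λ₂)`, which gives `c²₃ = 0`: this is (iii).
-/

open Filter Topology Asymptotics

section

variable {α 𝕜 : Type*} [NormedField 𝕜] {l : Filter α} {μ f g u : α → 𝕜} {a b : 𝕜}

theorem tendsto_mul_components_of_tendsto_smul {h : α → 𝕜} {c : 𝕜 × 𝕜 × 𝕜}
    (H : Tendsto (fun x => μ x • (f x, g x, h x)) l (𝓝 c)) :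
    Tendsto (fun x => μ x * f x) l (𝓝 c.1) ∧ Tendsto (fun x => μ x * g x) l (𝓝 c.2.1) ∧
      Tendsto (fun x => μ x * h x) l (𝓝 c.2.2) :=
  ⟨by simpa using H.fst_nhds, by simpa using H.snd_nhds.fst_nhds,
    by simpa using H.snd_nhds.snd_nhds⟩

theorem isBigO_of_tendsto_mul (hf : Tendsto (fun x => μ x * f x) l (𝓝 a))
    (hg : Tendsto (fun x => μ x * g x) l (𝓝 b)) (hb : b ≠ 0) : f =O[l] g := by
  have hne : ∀ᶠ x in l, μ x * g x ≠ 0 := hg.eventually_ne hb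
  refine isBigO_of_div_tendsto_nhds (hne.mono fun x hx hgx => by simp [hgx] at hx) (a / b) ?_
  refine (hf.div hg hb).congr' (hne.mono fun x hx => ?_)
  exact mul_div_mul_left _ _ (left_ne_zero_of_mul hx)

theorem eq_zero_of_tendsto_mul_of_isLittleO [l.NeBot] (hgf : g =o[l] f)
    (hf : Tendsto (fun x => μ x * f x) l (𝓝 a)) (hg : Tendsto (fun x => μ x * g x) l (𝓝 b)) :
    b = 0 :=
  tendsto_nhds_unique hg (((isBigO_refl μ l).mul_isLittleO hgf).tendsto_zero_of_tendsto hf)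

theorem Asymptotics.IsBigO.mul_isLittleO_of_tendsto_zero (hfg : f =O[l] g)
    (hu : Tendsto u l (𝓝 0)) : (fun x => f x * u x) =o[l] g := by
  simpa using hfg.mul_isLittleO (isLittleO_one_iff 𝕜 |>.mpr hu)

end

theorem exceptional_divisor_components_general
    (l1 l2 l3 l4 l5 : ℂ → ℂ)
    (ha2 : AnalyticAt ℂ l2 0)
    (ha4 : AnalyticAt ℂ l4 0)
    (h02 : l2 0 = 0)
    (h04 : l4 0 = 0)
    (c1 c2 : ℂ × ℂ × ℂ)
    (μ ν : ℂ → ℂ)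
    (hμ : Tendsto (fun ε => μ ε • ((l1 ε, l3 ε, l2 ε * l5 ε) : ℂ × ℂ × ℂ))
      (nhdsWithin 0 {0}ᶜ) (nhds c1))
    (hν : Tendsto (fun ε => ν ε •
        ((l1 ε + l3 ε + l1 ε * l2 ε, l5 ε, l3 ε * l4 ε) : ℂ × ℂ × ℂ))
      (nhdsWithin 0 {0}ᶜ) (nhds c2)) :
    (c2.1 = 0 ∧ c2.2.2 = 0)
    ∨ (c1.1 + c1.2.1 = 0 ∧ c1.2.2 = 0)
    ∨ (c1.2.2 = 0 ∧ c2.2.2 = 0) := by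
  obtain ⟨hμ1, hμ3, hμ25⟩ := tendsto_mul_components_of_tendsto_smul hμ
  obtain ⟨hνL, hν5, hν34⟩ := tendsto_mul_components_of_tendsto_smul hν
  have hl2 : Tendsto l2 (𝓝[≠] 0) (𝓝 0) :=
    (h02 ▸ ha2.continuousAt.tendsto).mono_left nhdsWithin_le_nhds
  have hl4 : Tendsto l4 (𝓝[≠] 0) (𝓝 0) :=
    (h04 ▸ ha4.continuousAt.tendsto).mono_left nhdsWithin_le_nhds
  by_cases hc13 : c1.2.2 = 0
  · by_cases hsum : c1.1 + c1.2.1 = 0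
    · exact Or.inr (Or.inl ⟨hsum, hc13⟩)
    refine Or.inr (Or.inr ⟨hc13, ?_⟩)
    have hμ13 : Tendsto (fun ε => μ ε * (l1 ε + l3 ε)) (𝓝[≠] 0) (𝓝 (c1.1 + c1.2.1)) := by
      simpa only [mul_add] using hμ1.add hμ3
    have h1 := isBigO_of_tendsto_mul hμ1 hμ13 hsum
    have h3 := isBigO_of_tendsto_mul hμ3 hμ13 hsum
    have hL := (h1.mul_isLittleO_of_tendsto_zero hl2).right_isBigO_add'
    exact eq_zero_of_tendsto_mul_of_isLittleO
      ((h3.mul_isLittleO_of_tendsto_zero hl4).trans_isBigO hL) hνL hν34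
  · left
    have h25 : (fun ε => l2 ε * l5 ε) =o[𝓝[≠] 0] l5 := by
      simpa only [mul_comm] using (isBigO_refl l5 _).mul_isLittleO_of_tendsto_zero hl2
    have h1 := (isBigO_of_tendsto_mul hμ1 hμ25 hc13).trans_isLittleO h25
    have h3 := (isBigO_of_tendsto_mul hμ3 hμ25 hc13).trans_isLittleO h25
    exact ⟨eq_zero_of_tendsto_mul_of_isLittleO
        ((h1.add h3).add (h1.isBigO.mul_isLittleO_of_tendsto_zero hl2)) hν5 hνL,
      eq_zero_of_tendsto_mul_of_isLittleO (h3.isBigO.mul_isLittleO_of_tendsto_zero hl4) hν5 hν34⟩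

/-- The exceptional divisor of the blow-up of the product of Bautin ideals
`𝓑₁ × 𝓑₂` is contained in the union of three components: if along an analytic
arc `ε ↦ λ(ε)`, `λ(0) = 0`, the normalized generator tuples
`μ(ε)·(λ₁, λ₃, λ₂λ₅)` and `ν(ε)·(λ₁+λ₃+λ₁λ₂, λ₅, λ₃λ₄)` converge to nonzero
vectors `c¹, c²`, then (i) `c₁² = c₃² = 0`, or (ii) `c₁¹ + c₂¹ = 0 ∧ c₃¹ = 0`,
or (iii) `c₃¹ = c₃² = 0`. -/
theorem exceptional_divisor_components
    (l1 l2 l3 l4 l5 : ℂ → ℂ)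
    (ha1 : AnalyticAt ℂ l1 0) (ha2 : AnalyticAt ℂ l2 0) (ha3 : AnalyticAt ℂ l3 0)
    (ha4 : AnalyticAt ℂ l4 0) (ha5 : AnalyticAt ℂ l5 0)
    (h01 : l1 0 = 0) (h02 : l2 0 = 0) (h03 : l3 0 = 0)
    (h04 : l4 0 = 0) (h05 : l5 0 = 0)
    (c1 c2 : ℂ × ℂ × ℂ) (hc1 : c1 ≠ 0) (hc2 : c2 ≠ 0)
    (μ ν : ℂ → ℂ)
    (hμ : Tendsto (fun ε => μ ε • ((l1 ε, l3 ε, l2 ε * l5 ε) : ℂ × ℂ × ℂ))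
      (nhdsWithin 0 {0}ᶜ) (nhds c1))
    (hν : Tendsto (fun ε => ν ε •
        ((l1 ε + l3 ε + l1 ε * l2 ε, l5 ε, l3 ε * l4 ε) : ℂ × ℂ × ℂ))
      (nhdsWithin 0 {0}ᶜ) (nhds c2)) :
    (c2.1 = 0 ∧ c2.2.2 = 0)
    ∨ (c1.1 + c1.2.1 = 0 ∧ c1.2.2 = 0)
    ∨ (c1.2.2 = 0 ∧ c2.2.2 = 0) :=
  exceptional_divisor_components_general l1 l2 l3 l4 l5 ha2 ha4 h02 h04 c1 c2 μ ν hμ hν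
end

section
/- Fix p, q, s ∈ ℂ and consider the analytic arc λ(ε) = (λ₁, λ₂, λ₃, λ₄, λ₅)(ε) = (ε, ε², −ε + pε², −qε, sε²). Define v¹(ε) = (λ₁(ε), λ₃(ε), λ₂(ε)λ₅(ε)) and v²(ε) = (λ₁(ε)+λ₃(ε)+λ₁(ε)λ₂(ε), λ₅(ε), λ₃(ε)λ₄(ε)). Then as ε → 0, ε⁻¹·v¹(ε) → (1, −1, 0) and ε⁻²·v²(ε) → (p, s, q). Hence every point ([1 : −1 : 0], [p : s : q]) with (p,s,q) ≠ 0 lies in the exceptional divisor of the blow-up of the product of Bautin ideals 𝓑₁ × 𝓑₂, so the component {c₁¹ + c₂¹ = 0, c₃¹ = 0} × ℙ² is attained. -/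
open Filter

/-- Along the analytic arc `λ(ε) = (ε, ε², −ε + pε², −qε, sε²)`, the normalized
Bautin generator tuples satisfy `ε⁻¹·v¹(ε) → (1, −1, 0)` and
`ε⁻²·v²(ε) → (p, s, q)` as `ε → 0`; hence every point
`([1 : −1 : 0], [p : s : q])` with `(p,s,q) ≠ 0` lies in the exceptional
divisor of the blow-up of `𝓑₁ × 𝓑₂`. -/
theorem arc_realizing_second_component (p q s : ℂ) :
    let l1 : ℂ → ℂ := fun ε => ε
    let l2 : ℂ → ℂ := fun ε => ε ^ 2
    let l3 : ℂ → ℂ := fun ε => -ε + p * ε ^ 2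
    let l4 : ℂ → ℂ := fun ε => -q * ε
    let l5 : ℂ → ℂ := fun ε => s * ε ^ 2
    Tendsto (fun ε : ℂ => ε⁻¹ • ((l1 ε, l3 ε, l2 ε * l5 ε) : ℂ × ℂ × ℂ))
      (nhdsWithin 0 {0}ᶜ) (nhds ((1 : ℂ), (-1 : ℂ), (0 : ℂ)))
    ∧ Tendsto (fun ε : ℂ => (ε ^ 2)⁻¹ •
        ((l1 ε + l3 ε + l1 ε * l2 ε, l5 ε, l3 ε * l4 ε) : ℂ × ℂ × ℂ))
      (nhdsWithin 0 {0}ᶜ) (nhds (p, s, q)) := by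
  refine ⟨?_, ?_⟩
  · have h : Tendsto (fun ε : ℂ => ((1 : ℂ), -1 + p * ε, s * ε ^ 3))
        (nhdsWithin 0 {0}ᶜ) (nhds ((1 : ℂ), (-1 : ℂ), (0 : ℂ))) := by
      have : Tendsto (fun ε : ℂ => ((1 : ℂ), -1 + p * ε, s * ε ^ 3))
          (nhds 0) (nhds ((1 : ℂ), (-1 : ℂ), (0 : ℂ))) := by
        have := (Continuous.tendsto (by continuity :
          Continuous (fun ε : ℂ => ((1 : ℂ), -1 + p * ε, s * ε ^ 3))) 0)
        simpa using this
      exact this.mono_left nhdsWithin_le_nhds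
    refine h.congr' ?_
    filter_upwards [self_mem_nhdsWithin] with ε (hε : ε ≠ 0)
    simp only [Prod.smul_mk, smul_eq_mul]
    refine Prod.ext ?_ (Prod.ext ?_ ?_) <;> field_simp <;> ring
  · have h : Tendsto (fun ε : ℂ => (p + ε, s, q - p * q * ε))
        (nhdsWithin 0 {0}ᶜ) (nhds (p, s, q)) := by
      have : Tendsto (fun ε : ℂ => (p + ε, s, q - p * q * ε))
          (nhds 0) (nhds (p, s, q)) := by
        have := (Continuous.tendsto (by continuity :
          Continuous (fun ε : ℂ => (p + ε, s, q - p * q * ε))) 0)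
        simpa using this
      exact this.mono_left nhdsWithin_le_nhds
    refine h.congr' ?_
    filter_upwards [self_mem_nhdsWithin] with ε (hε : ε ≠ 0)
    simp only [Prod.smul_mk, smul_eq_mul]
    refine Prod.ext ?_ (Prod.ext ?_ ?_) <;> field_simp <;> ring
end
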